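/- Let Y, Z be metric spaces, f : Y → Z a Borel map, and ν a finite Borel measure on Y. If d(y, f(y)) ≤ b for all y ∈ Y (viewing Z ⊆ Y), then for all κ₁, κ₂ > 0, Sep(f_*(ν); κ₁, κ₂) ≤ Sep(ν; κ₁, κ₂) + 2b. -/

import Mathlib

open MeasureTheory Metric Set Filter Topology

/-- The distance between two subsets of a metric space. -/
noncomputable def setDist {X : Type*} [PseudoMetricSpace X] (A B : Set X) : ℝ :=
  sInf (Set.image2 dist A B)

/-- The separation distance `Sep(μ; κ₁, κ₂)`. -/
noncomputable def mmSep {X : Type*} [PseudoMetricSpace X] [MeasurableSpace X]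
    (μ : Measure X) (κ₁ κ₂ : ℝ) : ℝ :=
  sSup {r | ∃ A B : Set X, MeasurableSet A ∧ MeasurableSet B ∧
    ENNReal.ofReal κ₁ ≤ μ A ∧ ENNReal.ofReal κ₂ ≤ μ B ∧ r = setDist A B}

/-- The partial diameter `diam(ν, c)`: infimum of diameters of Borel sets of measure `≥ c`. -/
noncomputable def partDiam {Y : Type*} [PseudoMetricSpace Y] [MeasurableSpace Y]
    (ν : Measure Y) (c : ℝ) : ℝ :=
  sInf {r | ∃ A : Set Y, MeasurableSet A ∧ ENNReal.ofReal c ≤ ν A ∧ r = Metric.diam A}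

/-- The observable diameter `ObsDiam_Y(X; -κ)`. -/
noncomputable def obsDiam (Y : Type*) {X : Type*} [PseudoMetricSpace X] [MeasurableSpace X]
    [PseudoMetricSpace Y] [MeasurableSpace Y] (μ : Measure X) (κ : ℝ) : ℝ :=
  sSup {r | ∃ f : X → Y, LipschitzWith 1 f ∧
    r = partDiam (Measure.map f μ) ((μ Set.univ).toReal - κ)}


/-! Pulling a pair of Borel sets back along `f` changes their distance by at most `2b`, and
thickening them by `b` yields a pair for `f_*ν` whose distance dropped by at most `2b`. The first
bounds every value of the supremum for `f_*ν` by a value for `ν`, the second transfers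
unboundedness from `ν` to `f_*ν`, which matters since an unbounded `sSup` on `ℝ` is `0`. -/

section SetDist

variable {X : Type*} [PseudoMetricSpace X] {A B A' B' : Set X}

lemma setDist_nonneg (A B : Set X) : 0 ≤ setDist A B :=
  Real.sInf_nonneg (by rintro _ ⟨a, _, c, _, rfl⟩; exact dist_nonneg)

lemma setDist_le_dist {a c : X} (ha : a ∈ A) (hc : c ∈ B) : setDist A B ≤ dist a c :=
  csInf_le ⟨0, by rintro _ ⟨_, _, _, _, rfl⟩; exact dist_nonneg⟩ ⟨a, ha, c, hc, rfl⟩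

lemma setDist_le_setDist_add {c : ℝ} (hA' : A'.Nonempty) (hB' : B'.Nonempty)
    (h : ∀ x ∈ A', ∀ y ∈ B', setDist A B ≤ dist x y + c) :
    setDist A B ≤ setDist A' B' + c := by
  suffices setDist A B - c ≤ setDist A' B' by linarith
  refine le_csInf (hA'.image2 hB') ?_
  rintro _ ⟨x, hx, y, hy, rfl⟩
  linarith [h x hx y hy]

lemma setDist_le_setDist_preimage_add {f : X → X} {b : ℝ} (hmove : ∀ x, dist x (f x) ≤ b)
    (hA : (f ⁻¹' A).Nonempty) (hB : (f ⁻¹' B).Nonempty) :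
    setDist A B ≤ setDist (f ⁻¹' A) (f ⁻¹' B) + 2 * b := by
  refine setDist_le_setDist_add hA hB fun x hx y hy ↦ ?_
  have hfxy : setDist A B ≤ dist (f x) (f y) := setDist_le_dist hx hy
  have := dist_triangle4 (f x) x y (f y)
  linarith [dist_comm (f x) x, hmove x, hmove y]

lemma setDist_le_setDist_cthickening_add {δ : ℝ} (hδ : 0 ≤ δ) (hA : A.Nonempty)
    (hB : B.Nonempty) :
    setDist A B ≤ setDist (cthickening δ A) (cthickening δ B) + 2 * δ := by
  refine setDist_le_setDist_add (hA.mono (self_subset_cthickening A))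
    (hB.mono (self_subset_cthickening B)) fun x hx y hy ↦ ?_
  refine le_of_forall_pos_lt_add fun ε hε ↦ ?_
  have hsub : ∀ E : Set X, cthickening δ E ⊆ thickening (δ + ε / 2) E :=
    cthickening_subset_thickening' (by linarith) (by linarith)
  obtain ⟨a, ha, hxa⟩ := mem_thickening_iff.1 (hsub A hx)
  obtain ⟨c, hc, hyc⟩ := mem_thickening_iff.1 (hsub B hy)
  have := dist_triangle4 a x y c
  linarith [setDist_le_dist ha hc, dist_comm a x]

end SetDist

lemma Real.sSup_le_sSup_add_of_forall_exists_le {S T : Set ℝ} {c : ℝ} (hc : 0 ≤ c)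
    (hT : ∀ t ∈ T, 0 ≤ t) (hST : ∀ s ∈ S, ∃ t ∈ T, s ≤ t + c)
    (hTS : ∀ t ∈ T, ∃ s ∈ S, t ≤ s + c) : sSup S ≤ sSup T + c := by
  by_cases hTbdd : BddAbove T
  · refine Real.sSup_le (fun s hs ↦ ?_) (by linarith [Real.sSup_nonneg hT])
    obtain ⟨t, ht, hst⟩ := hST s hs
    linarith [le_csSup hTbdd ht]
  · have hSbdd : ¬BddAbove S := fun ⟨M, hM⟩ ↦ hTbdd ⟨M + c, fun t ht ↦ by
      obtain ⟨s, hs, hts⟩ := hTS t ht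
      linarith [hM hs]⟩
    rw [Real.sSup_of_not_bddAbove hSbdd, Real.sSup_of_not_bddAbove hTbdd]
    linarith

lemma nonempty_of_ofReal_le_measure {X : Type*} [MeasurableSpace X] {μ : Measure X}
    {A : Set X} {κ : ℝ} (hκ : 0 < κ) (h : ENNReal.ofReal κ ≤ μ A) : A.Nonempty :=
  nonempty_of_measure_ne_zero ((ENNReal.ofReal_pos.2 hκ).trans_le h).ne'

lemma measure_le_map_cthickening {X : Type*} [PseudoMetricSpace X] [MeasurableSpace X]
    [OpensMeasurableSpace X] {μ : Measure X} {f : X → X} (hf : Measurable f) {b : ℝ}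
    (hmove : ∀ x, dist x (f x) ≤ b) (E : Set X) : μ E ≤ μ.map f (cthickening b E) := by
  rw [Measure.map_apply hf isClosed_cthickening.measurableSet]
  exact measure_mono fun x hx ↦ mem_cthickening_of_dist_le _ x b E hx (dist_comm x _ ▸ hmove x)

theorem sep_map_le_sep_add_general
    {Y : Type*} [MetricSpace Y] [MeasurableSpace Y] [BorelSpace Y]
    (f : Y → Y) (hf : Measurable f)
    (ν : Measure Y) (b : ℝ) (hb : 0 ≤ b)
    (hmove : ∀ y, dist y (f y) ≤ b) :
    ∀ κ₁ κ₂ : ℝ, 0 < κ₁ → 0 < κ₂ →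
      mmSep (Measure.map f ν) κ₁ κ₂ ≤ mmSep ν κ₁ κ₂ + 2 * b := by
  intro κ₁ κ₂ hκ₁ hκ₂
  refine Real.sSup_le_sSup_add_of_forall_exists_le (by positivity)
    (by rintro _ ⟨A, B, -, -, -, -, rfl⟩; exact setDist_nonneg A B) ?_ ?_
  · rintro _ ⟨A, B, hA, hB, hνA, hνB, rfl⟩
    rw [Measure.map_apply hf hA] at hνA
    rw [Measure.map_apply hf hB] at hνB
    exact ⟨_, ⟨_, _, hf hA, hf hB, hνA, hνB, rfl⟩, setDist_le_setDist_preimage_add hmove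
      (nonempty_of_ofReal_le_measure hκ₁ hνA) (nonempty_of_ofReal_le_measure hκ₂ hνB)⟩
  · rintro _ ⟨A, B, -, -, hνA, hνB, rfl⟩
    have hpush := measure_le_map_cthickening (μ := ν) hf hmove
    exact ⟨_, ⟨_, _, isClosed_cthickening.measurableSet, isClosed_cthickening.measurableSet,
      hνA.trans (hpush A), hνB.trans (hpush B), rfl⟩, setDist_le_setDist_cthickening_add hb
      (nonempty_of_ofReal_le_measure hκ₁ hνA) (nonempty_of_ofReal_le_measure hκ₂ hνB)⟩

theorem sep_map_le_sep_add
    {Y : Type*} [MetricSpace Y] [MeasurableSpace Y] [BorelSpace Y]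
    (Z : Set Y) (f : Y → Y) (hfZ : ∀ y, f y ∈ Z) (hf : Measurable f)
    (ν : Measure Y) [IsFiniteMeasure ν] (b : ℝ) (hb : 0 ≤ b)
    (hmove : ∀ y, dist y (f y) ≤ b) :
    ∀ κ₁ κ₂ : ℝ, 0 < κ₁ → 0 < κ₂ →
      mmSep (Measure.map f ν) κ₁ κ₂ ≤ mmSep ν κ₁ κ₂ + 2 * b :=
  sep_map_le_sep_add_general f hf ν b hb hmove
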